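/- arXiv:2009.07751 — 2 statements merged into one kernel-verified Lean document; each statement's English description precedes it below -/
import Mathlib

section
/- Let C = {(0,0)} ∪ ⋃_{i≥1} ((2^{i-1}+2^i ℤ) × (2^{i-1}+2^i ℤ)) ⊆ ℤ². Then for any nonzero v ∈ ℤ², the translate C + v is not equal to C. Equivalently, the only translation of ℤ² stabilizing C is the identity. -/
def Cset : Set (ℤ × ℤ) :=
  {p | p = (0, 0) ∨ ∃ i : ℕ, 1 ≤ i ∧ (2 ^ i : ℤ) ∣ (p.1 - 2 ^ (i - 1)) ∧
    (2 ^ i : ℤ) ∣ (p.2 - 2 ^ (i - 1))}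

def Bset : Set (ℤ × ℤ) :=
  {p | p = (0, 0) ∨ ∃ i : ℕ, 1 ≤ i ∧ (2 ^ i : ℤ) ∣ (p.1 - 2 ^ (i - 1)) ∧
    (2 ^ i : ℤ) ∣ p.2}

lemma key_val (a : ℤ) (ha : a ≠ 0) :
    (2 : ℤ) ^ (padicValInt 2 a + 1) ∣ a - 2 ^ padicValInt 2 a := by
  set k := padicValInt 2 a with hk
  have h1 : (2 : ℤ) ^ k ∣ a := by
    rw [show ((2:ℤ)) = ((2:ℕ):ℤ) by norm_num, padicValInt_dvd_iff]
    exact Or.inr le_rfl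
  obtain ⟨b, hb⟩ := h1
  have hodd : ¬ (2 : ℤ) ∣ b := by
    intro ⟨c, hc⟩
    have : ((2:ℕ) : ℤ) ^ (k + 1) ∣ a := ⟨c, by push_cast; rw [hb, hc]; ring⟩
    rw [padicValInt_dvd_iff] at this
    omega
  have h2 : (2 : ℤ) ∣ b - 1 := by omega
  obtain ⟨c, hc⟩ := h2
  exact ⟨c, by rw [hb, show b = 2 * c + 1 by omega]; ring⟩

lemma no_pow_dvd (i : ℕ) (hi : 1 ≤ i) : ¬ ((2:ℤ) ^ i ∣ (0:ℤ) - 2 ^ (i - 1)) := by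
  intro h
  have hd : (2:ℤ) ^ i ∣ 2 ^ (i - 1) := by
    rw [zero_sub, dvd_neg] at h; exact h
  have h1 := Int.le_of_dvd (by positivity) hd
  have h2 : (2:ℤ) ^ (i - 1) < 2 ^ i := pow_lt_pow_right₀ (by norm_num) (by omega)
  linarith

lemma axis_not_mem₁ (z : ℤ) (hz : z ≠ 0) : (0, z) ∉ Cset := by
  rintro (h | ⟨i, hi, h1, h2⟩)
  · exact hz (by simpa using congrArg Prod.snd h)
  · exact no_pow_dvd i hi h1

lemma axis_not_mem₂ (z : ℤ) (hz : z ≠ 0) : (z, 0) ∉ Cset := by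
  rintro (h | ⟨i, hi, h1, h2⟩)
  · exact hz (by simpa using congrArg Prod.fst h)
  · exact no_pow_dvd i hi h2

/-- No nontrivial translation of `ℤ²` stabilizes the set `C` of cross positions. -/
theorem stmt7 (v : ℤ × ℤ) (hv : v ≠ 0) : (fun p => p + v) '' Cset ≠ Cset := by
  intro h
  have hmem : ∀ p ∈ Cset, p + v ∈ Cset := by
    intro p hp
    rw [← h]
    exact ⟨p, hp, rfl⟩
  by_cases h1 : v.1 = 0
  · -- then v.2 ≠ 0
    have h2 : v.2 ≠ 0 := by
      intro h2; exact hv (Prod.ext h1 h2)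
    have hne : (-v.2 : ℤ) ≠ 0 := neg_ne_zero.mpr h2
    set k := padicValInt 2 (-v.2) with hk
    have hp : ((2:ℤ) ^ k, -v.2) ∈ Cset := by
      right
      exact ⟨k + 1, by omega, by simp, by simpa using key_val (-v.2) hne⟩
    have := hmem _ hp
    have heq : ((2:ℤ) ^ k, -v.2) + v = ((2:ℤ) ^ k, 0) := by
      rw [Prod.ext_iff]; constructor <;> simp [h1]
    rw [heq] at this
    exact axis_not_mem₂ _ (by positivity) this
  · -- v.1 ≠ 0
    have hne : (-v.1 : ℤ) ≠ 0 := neg_ne_zero.mpr h1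
    set k := padicValInt 2 (-v.1) with hk
    have hx : (2:ℤ) ^ (k + 1) ∣ -v.1 - 2 ^ k := key_val (-v.1) hne
    -- choose y
    by_cases hc : v.2 = -2 ^ k
    · -- use y = 3 * 2 ^ k
      have hp : ((-v.1 : ℤ), 3 * 2 ^ k) ∈ Cset := by
        right
        refine ⟨k + 1, by omega, by simpa using hx, ?_⟩
        simp only [Nat.add_sub_cancel]
        exact ⟨1, by ring⟩
      have := hmem _ hp
      have heq : ((-v.1 : ℤ), 3 * 2 ^ k) + v = (0, 3 * 2 ^ k + v.2) := by
        rw [Prod.ext_iff]; constructor <;> simp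
      rw [heq] at this
      have hz : 3 * (2:ℤ) ^ k + v.2 ≠ 0 := by
        rw [hc]
        have : (0:ℤ) < 2 ^ k := by positivity
        intro hh; nlinarith
      exact axis_not_mem₁ _ hz this
    · -- use y = 2 ^ k
      have hp : ((-v.1 : ℤ), 2 ^ k) ∈ Cset := by
        right
        exact ⟨k + 1, by omega, by simpa using hx, by simp⟩
      have := hmem _ hp
      have heq : ((-v.1 : ℤ), 2 ^ k) + v = (0, 2 ^ k + v.2) := by
        rw [Prod.ext_iff]; constructor <;> simp
      rw [heq] at this
      have hz : (2:ℤ) ^ k + v.2 ≠ 0 := by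
        intro hh; exact hc (by linarith)
      exact axis_not_mem₁ _ hz this
end

section
/- Define ω : H₃(ℤ) → {R, c₀, c₁} as follows: for x even, ω(x,(y,z)) = R, and the site is marked 'cross' iff (y,z) ∈ C and 'arm' iff (y,z) ∉ C; for x odd, ω(x,(y,z)) = c₁ iff (y,z) ∈ B and c₀ otherwise, where C = {(0,0)} ∪ ⋃_{i≥1}((2^{i-1}+2^iℤ)×(2^{i-1}+2^iℤ)) and B = {(0,0)} ∪ ⋃_{i≥1}((2^{i-1}+2^iℤ)×2^iℤ). Then for every even x, left multiplication by 𝗑 maps the set of cross sites {(x,(y,z)) : (y,z) ∈ C} bijectively onto the bold-digit sites {(x+1,(y,z)) : (y,z) ∈ B}, and for every odd x it maps {(x,(y,z)) : (y,z) ∈ B} onto {(x+1,(y,z)) : (y,z) ∈ C}. -/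
@[ext] structure H3 : Type where
  x : ℤ
  y : ℤ
  z : ℤ

namespace H3

instance : Group H3 where
  mul p q := ⟨p.x + q.x, p.y + q.y, p.z + q.z + p.x * q.y⟩
  one := ⟨0, 0, 0⟩
  inv p := ⟨-p.x, -p.y, -p.z + p.x * p.y⟩
  mul_assoc p q r := by
    ext
    · show p.x + q.x + r.x = p.x + (q.x + r.x); ring
    · show p.y + q.y + r.y = p.y + (q.y + r.y); ring
    · show p.z + q.z + p.x * q.y + r.z + (p.x + q.x) * r.y
        = p.z + (q.z + r.z + q.x * r.y) + p.x * (q.y + r.y); ring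
  one_mul p := by
    ext
    · show 0 + p.x = p.x; ring
    · show 0 + p.y = p.y; ring
    · show 0 + p.z + 0 * p.y = p.z; ring
  mul_one p := by
    ext
    · show p.x + 0 = p.x; ring
    · show p.y + 0 = p.y; ring
    · show p.z + 0 + p.x * 0 = p.z; ring
  inv_mul_cancel p := by
    ext
    · show -p.x + p.x = 0; ring
    · show -p.y + p.y = 0; ring
    · show -p.z + p.x * p.y + p.z + -p.x * p.y = 0; ring

def xH : H3 := ⟨1, 0, 0⟩
def yH : H3 := ⟨0, 1, 0⟩
def zH : H3 := ⟨0, 0, 1⟩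

end H3


inductive RSym : Type
  | cross : RSym
  | arm : RSym
  | c0 : RSym
  | c1 : RSym

open Classical in
/-- The configuration: on even levels, crosses at `C` and arms elsewhere; on odd
levels bold digits `c₁` at `B` and `c₀` elsewhere. -/
noncomputable def ω14 : H3 → RSym := fun g =>
  if g.x % 2 = 0 then (if (g.y, g.z) ∈ Cset then RSym.cross else RSym.arm)
  else (if (g.y, g.z) ∈ Bset then RSym.c1 else RSym.c0)


lemma CB_iff (y z : ℤ) : (y, z) ∈ Cset ↔ (y, z + y) ∈ Bset := by
  constructor
  · rintro (h | ⟨i, hi, h1, h2⟩)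
    · left; simp only [Prod.mk.injEq] at h ⊢; omega
    · right
      refine ⟨i, hi, h1, ?_⟩
      have hii : (2:ℤ)^(i-1) * 2 = (2:ℤ)^i := by rw [← pow_succ]; congr 1; omega
      have hz : z + y = (z - 2^(i-1)) + (y - 2^(i-1)) + 2^(i-1)*2 := by ring
      rw [hz, hii]
      exact dvd_add (dvd_add h2 h1) dvd_rfl
  · rintro (h | ⟨i, hi, h1, h2⟩)
    · left; simp only [Prod.mk.injEq] at h ⊢; omega
    · right
      refine ⟨i, hi, h1, ?_⟩
      have hii : (2:ℤ)^(i-1) * 2 = (2:ℤ)^i := by rw [← pow_succ]; congr 1; omega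
      have hz : z - 2^(i-1) = (z + y) - (y - 2^(i-1)) - 2^(i-1)*2 := by ring
      rw [hz, hii]
      exact dvd_sub (dvd_sub h2 h1) dvd_rfl

lemma BC_iff (y z : ℤ) : (y, z) ∈ Bset ↔ (y, z + y) ∈ Cset := by
  constructor
  · rintro (h | ⟨i, hi, h1, h2⟩)
    · left; simp only [Prod.mk.injEq] at h ⊢; omega
    · right
      refine ⟨i, hi, h1, ?_⟩
      have hz : z + y - 2^(i-1) = z + (y - 2^(i-1)) := by ring
      rw [hz]
      exact dvd_add h2 h1
  · rintro (h | ⟨i, hi, h1, h2⟩)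
    · left; simp only [Prod.mk.injEq] at h ⊢; omega
    · right
      refine ⟨i, hi, h1, ?_⟩
      have hz : z = (z + y - 2^(i-1)) - (y - 2^(i-1)) := by ring
      rw [hz]
      exact dvd_sub h2 h1

lemma xH_mul (g : H3) : H3.xH * g = ⟨1 + g.x, 0 + g.y, 0 + g.z + 1 * g.y⟩ := rfl

lemma image_half (x : ℤ) (S T : Set (ℤ × ℤ))
    (hST : ∀ y z : ℤ, (y, z) ∈ S ↔ (y, z + y) ∈ T) :
    (fun g => H3.xH * g) '' {g : H3 | g.x = x ∧ (g.y, g.z) ∈ S} =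
      {g : H3 | g.x = x + 1 ∧ (g.y, g.z) ∈ T} := by
  ext g
  simp only [Set.mem_image, Set.mem_setOf_eq]
  constructor
  · rintro ⟨a, ⟨hx, hS⟩, rfl⟩
    rw [xH_mul]
    refine ⟨by simp; omega, ?_⟩
    simpa using (hST a.y a.z).mp hS
  · rintro ⟨hx, hT⟩
    refine ⟨⟨g.x - 1, g.y, g.z - g.y⟩, ⟨show g.x - 1 = x by omega, ?_⟩, ?_⟩
    · exact (hST g.y (g.z - g.y)).mpr (by simpa using hT)
    · rw [xH_mul]; ext <;> simp <;> ring

/-- Left multiplication by `𝗑` maps cross sites on an even layer bijectively onto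
bold-digit sites of the layer above, and bold-digit sites of an odd layer onto
cross sites above. -/
theorem stmt14 (x : ℤ) :
    (Even x → (fun g => H3.xH * g) '' {g : H3 | g.x = x ∧ (g.y, g.z) ∈ Cset} =
      {g : H3 | g.x = x + 1 ∧ (g.y, g.z) ∈ Bset}) ∧
    (Odd x → (fun g => H3.xH * g) '' {g : H3 | g.x = x ∧ (g.y, g.z) ∈ Bset} =
      {g : H3 | g.x = x + 1 ∧ (g.y, g.z) ∈ Cset}) := by
  exact ⟨fun _ => image_half x Cset Bset CB_iff,
         fun _ => image_half x Bset Cset BC_iff⟩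
end
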